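/- arXiv:1906.04922 — 3 statements merged into one kernel-verified Lean document; each statement's English description precedes it below -/
import Mathlib

section
/- Let α : J → ℝ⁴ be a smooth curve in E⁴₂ with ⟨α,α⟩ ≡ 0 and ⟨α',α'⟩ ≡ 0, and suppose V_t = span{α(t), α'(t)} is two-dimensional for each t. Then α''(t) ∈ V_t for all t; i.e. there exist smooth functions A, B : J → ℝ with α''(t) = A(t)α(t) + B(t)α'(t). -/
/-- The neutral bilinear form of `E⁴₂` on `ℝ⁴`. -/
def neutralForm (x y : Fin 4 → ℝ) : ℝ :=
  -(x 0 * y 0) - x 1 * y 1 + x 2 * y 2 + x 3 * y 3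

def dot4 (x y : Fin 4 → ℝ) : ℝ := x 0 * y 0 + x 1 * y 1 + x 2 * y 2 + x 3 * y 3

def Jm (x : Fin 4 → ℝ) : Fin 4 → ℝ := ![-(x 0), -(x 1), x 2, x 3]

lemma dot4_pos {x : Fin 4 → ℝ} (hx : x ≠ 0) : 0 < dot4 x x := by
  unfold dot4
  rcases lt_or_ge 0 (x 0*x 0 + x 1*x 1 + x 2*x 2 + x 3*x 3) with h | h
  · exact h
  · exfalso
    have h0 : x 0 = 0 := by nlinarith [sq_nonneg (x 0), sq_nonneg (x 1), sq_nonneg (x 2), sq_nonneg (x 3)]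
    have h1 : x 1 = 0 := by nlinarith [sq_nonneg (x 0), sq_nonneg (x 1), sq_nonneg (x 2), sq_nonneg (x 3)]
    have h2 : x 2 = 0 := by nlinarith [sq_nonneg (x 0), sq_nonneg (x 1), sq_nonneg (x 2), sq_nonneg (x 3)]
    have h3 : x 3 = 0 := by nlinarith [sq_nonneg (x 0), sq_nonneg (x 1), sq_nonneg (x 2), sq_nonneg (x 3)]
    apply hx; funext i
    fin_cases i <;> [exact h0; exact h1; exact h2; exact h3]

lemma gram_pos {u v : Fin 4 → ℝ} (h : LinearIndependent ℝ ![u, v]) :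
    0 < dot4 u u * dot4 v v - dot4 u v ^ 2 := by
  have hind := Fintype.linearIndependent_iff.mp h
  have hv : v ≠ 0 := by
    intro hv0
    have := hind ![0, 1] (by simp [hv0, Fin.sum_univ_two]) 1
    simpa using this
  have hvv : 0 < dot4 v v := dot4_pos hv
  set z : Fin 4 → ℝ := (dot4 v v) • u - (dot4 u v) • v with hz
  have hzne : z ≠ 0 := by
    intro hz0
    have := hind ![dot4 v v, -(dot4 u v)] ?_ 0
    · simp at this; exact absurd this (ne_of_gt hvv)
    · simp only [Fin.sum_univ_two, Matrix.cons_val_zero, Matrix.cons_val_one, Matrix.head_cons]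
      rw [← hz0, hz]; module
  have hzz : 0 < dot4 z z := dot4_pos hzne
  have hid : dot4 z z = dot4 v v * (dot4 u u * dot4 v v - dot4 u v ^ 2) := by
    simp only [hz, dot4, Pi.sub_apply, Pi.smul_apply, smul_eq_mul]; ring
  nlinarith

lemma key {u v w : Fin 4 → ℝ} (h : LinearIndependent ℝ ![u, v])
    (huu : neutralForm u u = 0) (huv : neutralForm u v = 0) (hvv : neutralForm v v = 0)
    (huw : neutralForm u w = 0) (hvw : neutralForm v w = 0) :
    ∃ a b : ℝ, w = a • u + b • v := by
  have hd := gram_pos h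
  have hind := Fintype.linearIndependent_iff.mp h
  have hbli : LinearIndependent ℝ ![u, v, Jm u, Jm v] := by
    rw [Fintype.linearIndependent_iff]
    intro g hg
    simp only [Fin.sum_univ_four, Matrix.cons_val_zero, Matrix.cons_val_one, Matrix.head_cons,
      Matrix.cons_val_two, Matrix.cons_val_three, Matrix.tail_cons] at hg
    have eq0 := congrFun hg 0
    have eq1 := congrFun hg 1
    have eq2 := congrFun hg 2
    have eq3 := congrFun hg 3
    simp only [Jm, Pi.add_apply, Pi.smul_apply, smul_eq_mul, Pi.zero_apply,
      Matrix.cons_val_zero, Matrix.cons_val_one, Matrix.head_cons,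
      Matrix.cons_val_two, Matrix.cons_val_three, Matrix.tail_cons] at eq0 eq1 eq2 eq3
    simp only [neutralForm, dot4] at huu huv hvv hd ⊢
    have e1 : g 2 * (u 0 * u 0 + u 1 * u 1 + u 2 * u 2 + u 3 * u 3)
        + g 3 * (u 0 * v 0 + u 1 * v 1 + u 2 * v 2 + u 3 * v 3) = 0 := by
      linear_combination (-(u 0)) * eq0 - u 1 * eq1 + u 2 * eq2 + u 3 * eq3 - g 0 * huu - g 1 * huv
    have e2 : g 2 * (u 0 * v 0 + u 1 * v 1 + u 2 * v 2 + u 3 * v 3)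
        + g 3 * (v 0 * v 0 + v 1 * v 1 + v 2 * v 2 + v 3 * v 3) = 0 := by
      linear_combination (-(v 0)) * eq0 - v 1 * eq1 + v 2 * eq2 + v 3 * eq3 - g 0 * huv - g 1 * hvv
    have hg2 : g 2 = 0 := by
      have h2d : g 2 * ((u 0 * u 0 + u 1 * u 1 + u 2 * u 2 + u 3 * u 3) *
          (v 0 * v 0 + v 1 * v 1 + v 2 * v 2 + v 3 * v 3)
          - (u 0 * v 0 + u 1 * v 1 + u 2 * v 2 + u 3 * v 3) ^ 2) = 0 := by
        linear_combination (v 0 * v 0 + v 1 * v 1 + v 2 * v 2 + v 3 * v 3) * e1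
          - (u 0 * v 0 + u 1 * v 1 + u 2 * v 2 + u 3 * v 3) * e2
      exact (mul_eq_zero.mp h2d).resolve_right (ne_of_gt hd)
    have hg3 : g 3 = 0 := by
      have h3d : g 3 * ((u 0 * u 0 + u 1 * u 1 + u 2 * u 2 + u 3 * u 3) *
          (v 0 * v 0 + v 1 * v 1 + v 2 * v 2 + v 3 * v 3)
          - (u 0 * v 0 + u 1 * v 1 + u 2 * v 2 + u 3 * v 3) ^ 2) = 0 := by
        linear_combination (u 0 * u 0 + u 1 * u 1 + u 2 * u 2 + u 3 * u 3) * e2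
          - (u 0 * v 0 + u 1 * v 1 + u 2 * v 2 + u 3 * v 3) * e1
      exact (mul_eq_zero.mp h3d).resolve_right (ne_of_gt hd)
    have h01 : ∀ i, ![g 0, g 1] i = 0 := by
      apply hind
      simp only [Fin.sum_univ_two, Matrix.cons_val_zero, Matrix.cons_val_one, Matrix.head_cons]
      funext j
      have := congrFun hg j
      simp only [Pi.add_apply, Pi.smul_apply, smul_eq_mul, Pi.zero_apply, hg2, hg3] at this ⊢
      linarith [this]
    intro i
    fin_cases i
    · simpa using h01 0
    · simpa using h01 1
    · exact hg2
    · exact hg3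
  have hspan : Submodule.span ℝ (Set.range ![u, v, Jm u, Jm v]) = ⊤ := by
    apply hbli.span_eq_top_of_card_eq_finrank
    simp [Module.finrank_fintype_fun_eq_card]
  have hw : w ∈ Submodule.span ℝ (Set.range ![u, v, Jm u, Jm v]) := by
    rw [hspan]; trivial
  rw [Submodule.mem_span_range_iff_exists_fun] at hw
  obtain ⟨c, hc⟩ := hw
  simp only [Fin.sum_univ_four, Matrix.cons_val_zero, Matrix.cons_val_one, Matrix.head_cons,
    Matrix.cons_val_two, Matrix.cons_val_three, Matrix.tail_cons] at hc
  have eq0 := congrFun hc 0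
  have eq1 := congrFun hc 1
  have eq2 := congrFun hc 2
  have eq3 := congrFun hc 3
  simp only [Jm, Pi.add_apply, Pi.smul_apply, smul_eq_mul,
    Matrix.cons_val_zero, Matrix.cons_val_one, Matrix.head_cons,
    Matrix.cons_val_two, Matrix.cons_val_three, Matrix.tail_cons] at eq0 eq1 eq2 eq3
  simp only [neutralForm, dot4] at huu huv hvv huw hvw hd
  have e1 : c 2 * (u 0 * u 0 + u 1 * u 1 + u 2 * u 2 + u 3 * u 3)
      + c 3 * (u 0 * v 0 + u 1 * v 1 + u 2 * v 2 + u 3 * v 3) = 0 := by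
    linear_combination (-(u 0)) * eq0 - u 1 * eq1 + u 2 * eq2 + u 3 * eq3 - c 0 * huu - c 1 * huv + huw
  have e2 : c 2 * (u 0 * v 0 + u 1 * v 1 + u 2 * v 2 + u 3 * v 3)
      + c 3 * (v 0 * v 0 + v 1 * v 1 + v 2 * v 2 + v 3 * v 3) = 0 := by
    linear_combination (-(v 0)) * eq0 - v 1 * eq1 + v 2 * eq2 + v 3 * eq3 - c 0 * huv - c 1 * hvv + hvw
  have hc2 : c 2 = 0 := by
    have h2d : c 2 * ((u 0 * u 0 + u 1 * u 1 + u 2 * u 2 + u 3 * u 3) *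
        (v 0 * v 0 + v 1 * v 1 + v 2 * v 2 + v 3 * v 3)
        - (u 0 * v 0 + u 1 * v 1 + u 2 * v 2 + u 3 * v 3) ^ 2) = 0 := by
      linear_combination (v 0 * v 0 + v 1 * v 1 + v 2 * v 2 + v 3 * v 3) * e1
        - (u 0 * v 0 + u 1 * v 1 + u 2 * v 2 + u 3 * v 3) * e2
    exact (mul_eq_zero.mp h2d).resolve_right (ne_of_gt hd)
  have hc3 : c 3 = 0 := by
    have h3d : c 3 * ((u 0 * u 0 + u 1 * u 1 + u 2 * u 2 + u 3 * u 3) *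
        (v 0 * v 0 + v 1 * v 1 + v 2 * v 2 + v 3 * v 3)
        - (u 0 * v 0 + u 1 * v 1 + u 2 * v 2 + u 3 * v 3) ^ 2) = 0 := by
      linear_combination (u 0 * u 0 + u 1 * u 1 + u 2 * u 2 + u 3 * u 3) * e2
        - (u 0 * v 0 + u 1 * v 1 + u 2 * v 2 + u 3 * v 3) * e1
    exact (mul_eq_zero.mp h3d).resolve_right (ne_of_gt hd)
  exact ⟨c 0, c 1, by simpa [hc2, hc3] using hc.symm⟩

lemma hasDerivAt_proj4 {f : ℝ → Fin 4 → ℝ} {f' : Fin 4 → ℝ} {t : ℝ}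
    (hf : HasDerivAt f f' t) (i : Fin 4) : HasDerivAt (fun s => f s i) (f' i) t :=
  (ContinuousLinearMap.proj (R := ℝ) (φ := fun _ : Fin 4 => ℝ) i).hasFDerivAt.comp_hasDerivAt t hf

lemma hasDerivAt_nf {f g : ℝ → Fin 4 → ℝ} {f' g' : Fin 4 → ℝ} {t : ℝ}
    (hf : HasDerivAt f f' t) (hg : HasDerivAt g g' t) :
    HasDerivAt (fun s => neutralForm (f s) (g s))
      (neutralForm f' (g t) + neutralForm (f t) g') t := by
  have h0 := (hasDerivAt_proj4 hf 0).mul (hasDerivAt_proj4 hg 0)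
  have h1 := (hasDerivAt_proj4 hf 1).mul (hasDerivAt_proj4 hg 1)
  have h2 := (hasDerivAt_proj4 hf 2).mul (hasDerivAt_proj4 hg 2)
  have h3 := (hasDerivAt_proj4 hf 3).mul (hasDerivAt_proj4 hg 3)
  have := ((h0.neg.sub h1).add h2).add h3
  convert this using 1
  · rfl
  · rfl
  · funext s; simp [neutralForm]
  · simp [neutralForm]; ring

lemma deriv_zero_of_eq_zero {F : ℝ → ℝ} {c t : ℝ} (hF : ∀ s, F s = 0)
    (h : HasDerivAt F c t) : c = 0 := by
  have hF' : F = fun _ => 0 := funext hF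
  rw [← h.deriv, hF', deriv_const]

lemma contDiff_dot4 {f g : ℝ → Fin 4 → ℝ} (hf : ContDiff ℝ (⊤ : ℕ∞) f) (hg : ContDiff ℝ (⊤ : ℕ∞) g) :
    ContDiff ℝ (⊤ : ℕ∞) (fun t => dot4 (f t) (g t)) := by
  have pf : ∀ i : Fin 4, ContDiff ℝ (⊤ : ℕ∞) (fun t => f t i) := fun i =>
    (ContinuousLinearMap.proj (R := ℝ) (φ := fun _ : Fin 4 => ℝ) i).contDiff.comp hf
  have pg : ∀ i : Fin 4, ContDiff ℝ (⊤ : ℕ∞) (fun t => g t i) := fun i =>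
    (ContinuousLinearMap.proj (R := ℝ) (φ := fun _ : Fin 4 => ℝ) i).contDiff.comp hg
  unfold dot4
  exact ((((pf 0).mul (pg 0)).add ((pf 1).mul (pg 1))).add ((pf 2).mul (pg 2))).add
    ((pf 3).mul (pg 3))

lemma nf_comm (x y : Fin 4 → ℝ) : neutralForm x y = neutralForm y x := by
  simp [neutralForm]; ring

/-- If a smooth curve `α` in `E⁴₂` satisfies `⟨α,α⟩ ≡ 0`, `⟨α',α'⟩ ≡ 0`
and `V_t = span{α(t), α'(t)}` is two-dimensional for every `t`, then
`α''(t) ∈ V_t`, i.e. there are smooth `A, B : ℝ → ℝ` with `α'' = A α + B α'`. -/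
theorem second_derivative_in_span
    (α : ℝ → (Fin 4 → ℝ)) (hα : ContDiff ℝ (⊤ : ℕ∞) α)
    (h1 : ∀ t, neutralForm (α t) (α t) = 0)
    (h2 : ∀ t, neutralForm (deriv α t) (deriv α t) = 0)
    (hdim : ∀ t, LinearIndependent ℝ ![α t, deriv α t]) :
    (∀ t, deriv (deriv α) t ∈ Submodule.span ℝ {α t, deriv α t}) ∧
      ∃ A B : ℝ → ℝ, ContDiff ℝ (⊤ : ℕ∞) A ∧ ContDiff ℝ (⊤ : ℕ∞) B ∧
        ∀ t, deriv (deriv α) t = A t • α t + B t • deriv α t := by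
  have topsucc : (((⊤ : ℕ∞) : WithTop ℕ∞) + 1) = ((⊤ : ℕ∞) : WithTop ℕ∞) := rfl
  have hα1 : ContDiff ℝ (⊤ : ℕ∞) (deriv α) :=
    (contDiff_succ_iff_deriv.mp (topsucc ▸ hα)).2.2
  have hα2 : ContDiff ℝ (⊤ : ℕ∞) (deriv (deriv α)) :=
    (contDiff_succ_iff_deriv.mp (topsucc ▸ hα1)).2.2
  have hdα : ∀ t, HasDerivAt α (deriv α t) t := fun t =>
    (hα.differentiable (by simp) t).hasDerivAt
  have hdα1 : ∀ t, HasDerivAt (deriv α) (deriv (deriv α) t) t := fun t =>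
    (hα1.differentiable (by simp) t).hasDerivAt
  have hB1 : ∀ t, neutralForm (α t) (deriv α t) = 0 := by
    intro t
    have hz := deriv_zero_of_eq_zero h1 (hasDerivAt_nf (hdα t) (hdα t))
    have hc := nf_comm (deriv α t) (α t)
    linarith
  have hB2 : ∀ t, neutralForm (α t) (deriv (deriv α) t) = 0 := by
    intro t
    have hz := deriv_zero_of_eq_zero hB1 (hasDerivAt_nf (hdα t) (hdα1 t))
    linarith [h2 t]
  have hB3 : ∀ t, neutralForm (deriv α t) (deriv (deriv α) t) = 0 := by
    intro t
    have hz := deriv_zero_of_eq_zero h2 (hasDerivAt_nf (hdα1 t) (hdα1 t))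
    have hc := nf_comm (deriv (deriv α) t) (deriv α t)
    linarith
  have hkey : ∀ t, ∃ a b : ℝ, deriv (deriv α) t = a • α t + b • deriv α t := fun t =>
    key (hdim t) (h1 t) (hB1 t) (h2 t) (hB2 t) (hB3 t)
  have hD : ∀ t, dot4 (α t) (α t) * dot4 (deriv α t) (deriv α t)
      - dot4 (α t) (deriv α t) ^ 2 ≠ 0 := fun t => ne_of_gt (gram_pos (hdim t))
  constructor
  · intro t
    obtain ⟨a, b, hab⟩ := hkey t
    rw [hab]
    exact Submodule.add_mem _
      (Submodule.smul_mem _ _ (Submodule.subset_span (Set.mem_insert _ _)))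
      (Submodule.smul_mem _ _ (Submodule.subset_span (Set.mem_insert_of_mem _ rfl)))
  · refine ⟨fun t => (dot4 (deriv (deriv α) t) (α t) * dot4 (deriv α t) (deriv α t)
        - dot4 (deriv (deriv α) t) (deriv α t) * dot4 (α t) (deriv α t)) /
        (dot4 (α t) (α t) * dot4 (deriv α t) (deriv α t) - dot4 (α t) (deriv α t) ^ 2),
      fun t => (dot4 (deriv (deriv α) t) (deriv α t) * dot4 (α t) (α t)
        - dot4 (deriv (deriv α) t) (α t) * dot4 (α t) (deriv α t)) /
        (dot4 (α t) (α t) * dot4 (deriv α t) (deriv α t) - dot4 (α t) (deriv α t) ^ 2),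
      ?_, ?_, ?_⟩
    · exact ContDiff.div
        (((contDiff_dot4 hα2 hα).mul (contDiff_dot4 hα1 hα1)).sub
          ((contDiff_dot4 hα2 hα1).mul (contDiff_dot4 hα hα1)))
        (((contDiff_dot4 hα hα).mul (contDiff_dot4 hα1 hα1)).sub
          ((contDiff_dot4 hα hα1).pow 2)) hD
    · exact ContDiff.div
        (((contDiff_dot4 hα2 hα1).mul (contDiff_dot4 hα hα)).sub
          ((contDiff_dot4 hα2 hα).mul (contDiff_dot4 hα hα1)))
        (((contDiff_dot4 hα hα).mul (contDiff_dot4 hα1 hα1)).sub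
          ((contDiff_dot4 hα hα1).pow 2)) hD
    · intro t
      obtain ⟨a, b, hab⟩ := hkey t
      have hWU : dot4 (deriv (deriv α) t) (α t)
          = a * dot4 (α t) (α t) + b * dot4 (α t) (deriv α t) := by
        rw [hab]; simp [dot4]; ring
      have hWV : dot4 (deriv (deriv α) t) (deriv α t)
          = a * dot4 (α t) (deriv α t) + b * dot4 (deriv α t) (deriv α t) := by
        rw [hab]; simp [dot4]; ring
      have hA : (dot4 (deriv (deriv α) t) (α t) * dot4 (deriv α t) (deriv α t)
          - dot4 (deriv (deriv α) t) (deriv α t) * dot4 (α t) (deriv α t)) /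
          (dot4 (α t) (α t) * dot4 (deriv α t) (deriv α t) - dot4 (α t) (deriv α t) ^ 2)
          = a := by
        rw [hWU, hWV]; field_simp [hD t]; ring
      have hB : (dot4 (deriv (deriv α) t) (deriv α t) * dot4 (α t) (α t)
          - dot4 (deriv (deriv α) t) (α t) * dot4 (α t) (deriv α t)) /
          (dot4 (α t) (α t) * dot4 (deriv α t) (deriv α t) - dot4 (α t) (deriv α t) ^ 2)
          = b := by
        rw [hWU, hWV, div_eq_iff (hD t)]; ring
      beta_reduce
      rw [hA, hB]
      exact hab
end

section
/- For the Lorentzian metric g_m = -(ds⊗dt + dt⊗ds) + 2m dt⊗dt on Ω = I × J, the Gaussian curvature (sectional curvature of the plane spanned by ∂s, ∂t) equals m_ss, the second partial derivative of m with respect to s. -/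
/-- Partial derivative of a function `ℝ² → ℝ` in the direction of the `i`-th coordinate
(`i = 0` is `∂/∂s`, `i = 1` is `∂/∂t`). -/
noncomputable def pd (i : Fin 2) (f : ℝ → ℝ → ℝ) (s t : ℝ) : ℝ :=
  if i = 0 then deriv (fun x => f x t) s else deriv (fun y => f s y) t

/-- Components of the Lorentzian metric `g_m = -(ds⊗dt + dt⊗ds) + 2m dt⊗dt`. -/
def gmet (m : ℝ → ℝ → ℝ) : Fin 2 → Fin 2 → ℝ → ℝ → ℝ :=
  ![![fun _ _ => 0, fun _ _ => -1], ![fun _ _ => -1, fun s t => 2 * m s t]]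

/-- Components of the inverse of the metric `g_m`. -/
def ginv (m : ℝ → ℝ → ℝ) : Fin 2 → Fin 2 → ℝ → ℝ → ℝ :=
  ![![fun s t => -(2 * m s t), fun _ _ => -1], ![fun _ _ => -1, fun _ _ => 0]]

/-- Christoffel symbols `Γ^k_{ij}` of the Levi-Civita connection of `g_m`. -/
noncomputable def christoffel (m : ℝ → ℝ → ℝ) (k i j : Fin 2) (s t : ℝ) : ℝ :=
  (1 / 2) * ∑ l : Fin 2, ginv m k l s t *
    (pd i (gmet m j l) s t + pd j (gmet m i l) s t - pd l (gmet m i j) s t)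

/-- Covariant derivative (for `g_m`) of a vector field `X` in the `i`-th coordinate
direction: `(∇_i X)^k = ∂_i X^k + Γ^k_{ij} X^j`. -/
noncomputable def covDeriv (m : ℝ → ℝ → ℝ) (i : Fin 2) (X : Fin 2 → ℝ → ℝ → ℝ) :
    Fin 2 → ℝ → ℝ → ℝ :=
  fun k s t => pd i (X k) s t + ∑ j : Fin 2, christoffel m k i j s t * X j s t

/-- The coordinate vector field `∂s`. -/
def dS : Fin 2 → ℝ → ℝ → ℝ := ![fun _ _ => 1, fun _ _ => 0]

/-- The coordinate vector field `∂t`. -/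
def dT : Fin 2 → ℝ → ℝ → ℝ := ![fun _ _ => 0, fun _ _ => 1]

/-- The curvature vector field `R(∂s,∂t)∂t = ∇_{∂s}∇_{∂t}∂t - ∇_{∂t}∇_{∂s}∂t`
(the coordinate fields commute, so there is no Lie-bracket term). -/
noncomputable def curvVec (m : ℝ → ℝ → ℝ) : Fin 2 → ℝ → ℝ → ℝ :=
  fun k s t => covDeriv m 0 (covDeriv m 1 dT) k s t - covDeriv m 1 (covDeriv m 0 dT) k s t

/-- The Gaussian curvature
`K = R(∂s,∂t,∂t,∂s)/(⟨∂s,∂s⟩⟨∂t,∂t⟩ - ⟨∂s,∂t⟩²)`, where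
`R(∂s,∂t,∂t,∂s) = ⟨R(∂s,∂t)∂t, ∂s⟩` and the denominator equals `-1`. -/
noncomputable def gaussK (m : ℝ → ℝ → ℝ) (s t : ℝ) : ℝ :=
  (∑ k : Fin 2, ∑ l : Fin 2, gmet m k l s t * curvVec m k s t * dS l s t) /
    (gmet m 0 0 s t * gmet m 1 1 s t - gmet m 0 1 s t * gmet m 0 1 s t)

/-- For the Lorentzian metric `g_m = -(ds⊗dt + dt⊗ds) + 2m dt⊗dt`,
the Gaussian curvature equals `m_ss`. -/
theorem gaussK_eq_mss (m : ℝ → ℝ → ℝ)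
    (hm : ContDiff ℝ (⊤ : ℕ∞) (fun p : ℝ × ℝ => m p.1 p.2)) (s t : ℝ) :
    gaussK m s t = pd 0 (pd 0 m) s t := by
  have hd : ∀ (x t : ℝ), DifferentiableAt ℝ (fun x => m x t) x := fun x t =>
    ((hm.differentiable (by simp)).comp (differentiable_id.prodMk (differentiable_const t))) x
  have h2 : ∀ s t : ℝ, deriv (fun x => 2 * m x t) s = 2 * deriv (fun x => m x t) s :=
    fun s t => deriv_const_mul 2 (hd s t)
  -- Christoffel symbol values with upper index 1
  have c111 : ∀ s t : ℝ, christoffel m 1 1 1 s t = pd 0 m s t := by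
    intro s t
    simp [christoffel, ginv, gmet, pd, Fin.sum_univ_two, h2]
  have c100 : ∀ s t : ℝ, christoffel m 1 0 0 s t = 0 := by
    intro s t
    simp [christoffel, ginv, gmet, pd, Fin.sum_univ_two]
  have c101 : ∀ s t : ℝ, christoffel m 1 0 1 s t = 0 := by
    intro s t
    simp [christoffel, ginv, gmet, pd, Fin.sum_univ_two]
  have c110 : ∀ s t : ℝ, christoffel m 1 1 0 s t = 0 := by
    intro s t
    simp [christoffel, ginv, gmet, pd, Fin.sum_univ_two]
  -- the inner covariant derivatives, component 1
  have hY : covDeriv m 1 dT 1 = pd 0 m := by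
    funext s t
    simp [covDeriv, dT, pd, Fin.sum_univ_two, c111, c110]
  have hZ : covDeriv m 0 dT 1 = fun _ _ => 0 := by
    funext s t
    simp [covDeriv, dT, pd, Fin.sum_univ_two, c101, c100]
  -- assemble
  have cov1 : ∀ (i : Fin 2) (X : Fin 2 → ℝ → ℝ → ℝ), covDeriv m i X 1 s t =
      pd i (X 1) s t + (christoffel m 1 i 0 s t * X 0 s t +
        christoffel m 1 i 1 s t * X 1 s t) := by
    intro i X
    simp [covDeriv, Fin.sum_univ_two]
  have hnum : curvVec m 1 s t = pd 0 (pd 0 m) s t := by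
    simp only [curvVec, cov1, hY, hZ, c100, c101, c110, c111]
    simp [pd, dT]
  simp only [gaussK, gmet, dS, Fin.sum_univ_two]
  simp only [Matrix.cons_val_zero, Matrix.cons_val_one, Matrix.head_cons]
  rw [hnum]
  ring
end

section
/- Let e₁, e₂ be a pseudo-orthonormal tangent frame on a quasi-minimal Lorentzian surface in R⁴₂(c) with ⟨eᵢ,eⱼ⟩ = 1 - δᵢⱼ, let e₃ = -H, let h³ᵢᵢ denote the e₃-component of α(eᵢ,eᵢ), and define ξᵢ by ∇⊥_{eᵢ}e₃ = ξᵢe₃. Then the immersion is biconservative if and only if ξ₁h³₂₂ e₁ + ξ₂h³₁₁ e₂ = 0, equivalently ξ₁h³₂₂ = 0 and ξ₂h³₁₁ = 0. -/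
/-- On a quasi-minimal Lorentzian surface in `R⁴₂(c)` with
pseudo-orthonormal tangent frame `e₁,e₂` (`⟨eᵢ,eⱼ⟩ = 1 - δᵢⱼ`), `e₃ = -H`,
shape operators `A_{e₃}e₁ = -h³₁₁e₂`, `A_{e₃}e₂ = -h³₂₂e₁` and normal connection
`∇⊥_{eᵢ}e₃ = ξᵢe₃`, the immersion is biconservative if and only if
`ξ₁h³₂₂ e₁ + ξ₂h³₁₁ e₂ = 0`, equivalently `ξ₁h³₂₂ = 0` and `ξ₂h³₁₁ = 0`. -/
theorem biconservative_frame_characterization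
    {V N : Type*} [AddCommGroup V] [Module ℝ V] [AddCommGroup N] [Module ℝ N]
    (A : N →ₗ[ℝ] V →ₗ[ℝ] V)  -- the shape operator, linear in the normal direction
    (e₁ e₂ : V) (e₃ n₁ n₂ : N) (ξ₁ ξ₂ h311 h322 : ℝ)
    (hind : LinearIndependent ℝ ![e₁, e₂])
    (hA1 : A e₃ e₁ = -h311 • e₂) (hA2 : A e₃ e₂ = -h322 • e₁)
    (hn1 : n₁ = ξ₁ • e₃)  -- `n₁ = ∇⊥_{e₁}e₃`
    (hn2 : n₂ = ξ₂ • e₃)  -- `n₂ = ∇⊥_{e₂}e₃`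
    (Biconservative : Prop)
    (hdef : Biconservative ↔ A n₁ e₂ + A n₂ e₁ = 0) :
    (Biconservative ↔ (ξ₁ * h322) • e₁ + (ξ₂ * h311) • e₂ = 0) ∧
      (Biconservative ↔ (ξ₁ * h322 = 0 ∧ ξ₂ * h311 = 0)) := by
  have key : A n₁ e₂ + A n₂ e₁ = -((ξ₁ * h322) • e₁ + (ξ₂ * h311) • e₂) := by
    rw [hn1, hn2, map_smul, map_smul, LinearMap.smul_apply, LinearMap.smul_apply,
      hA1, hA2, smul_smul, smul_smul]
    module
  have h1 : Biconservative ↔ (ξ₁ * h322) • e₁ + (ξ₂ * h311) • e₂ = 0 := by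
    rw [hdef, key, neg_eq_zero]
  refine ⟨h1, h1.trans ?_⟩
  rw [LinearIndependent.pair_iff] at hind
  constructor
  · intro h; exact hind _ _ h
  · rintro ⟨h1, h2⟩; rw [h1, h2]; simp
end
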